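/- Let L > 0, ν ≥ 0, r ∈ ℝ³ with ‖r‖₂ = 1, and let k > 2νL². Let m : [0,∞) × [0,L] → ℝ³ be twice continuously differentiable in (t,x), satisfy ∂m/∂t = m × m_xx − ν m × (m × m_xx) + k(r − m) on [0,∞) × [0,L] with Neumann boundary conditions m_x(t,0) = m_x(t,L) = 0. Then for all t ≥ 0, ∫₀ᴸ ‖m_x(t,x)‖₂² dx + ∫₀ᴸ ‖m(t,x) − r‖₂² dx ≤ e^{−2(k − 2νL²)t} ( ∫₀ᴸ ‖m_x(0,x)‖₂² dx + ∫₀ᴸ ‖m(0,x) − r‖₂² dx ); i.e. ‖m(·,t) − r‖_{H¹}² ≤ e^{−2(k − 2νL²)t} ‖m(·,0) − r‖_{H¹}². (The paper's Theorem 3.8: global exponential stability of r in the H¹-norm under proportional control; the paper states the threshold as k > 8νL⁴.) -/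

import Mathlib

/-!
Let `E(t) = ∫₀ᴸ ‖m_x‖² + ∫₀ᴸ ‖m - r‖²`. Differentiating under the integral and integrating
`⟪m_tx, m_x⟫` by parts (Neumann data) gives `E' = 2 ∫ ⟪m_t, m - r - m_xx⟫`. Substituting the
equation, `⟪m × m_xx, r⟫` integrates to zero because `m × m_xx = (m × m_x)_x` (the other
precession terms vanish pointwise), the damping term contributes
`-ν ‖m × m_xx‖² + ν ⟪m × (m × m_xx), r⟫`, and the control contributes `-k E`. Integrating by parts
once more, `∫ ⟪m × (m × m_xx), r⟫ = ∫ ⟪m_x × r, m × m_x⟫`; since `m × m_x` vanishes at `x = 0`,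
it is bounded by `∫ ‖m × m_xx‖`, and Cauchy–Schwarz with AM–GM bounds the cross term by
`∫ ‖m × m_xx‖² + L²/4 ∫ ‖m_x‖²`. Hence `E' ≤ -2 (k - νL²/4) E`, and Grönwall's inequality
concludes.
-/

/-- Cross product on `ℝ³ = EuclideanSpace ℝ (Fin 3)`. -/
noncomputable def cross3 (u v : EuclideanSpace ℝ (Fin 3)) : EuclideanSpace ℝ (Fin 3) :=
  (WithLp.equiv 2 (Fin 3 → ℝ)).symm
    ![u 1 * v 2 - u 2 * v 1, u 2 * v 0 - u 0 * v 2, u 0 * v 1 - u 1 * v 0]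

/-- Second spatial derivative `m_xx` of `m(t, x)`. -/
noncomputable def mxx (m : ℝ → ℝ → EuclideanSpace ℝ (Fin 3)) (t x : ℝ) :
    EuclideanSpace ℝ (Fin 3) :=
  deriv (deriv (m t)) x

local notation "E3" => EuclideanSpace ℝ (Fin 3)

open scoped RealInnerProductSpace
open intervalIntegral

section CrossProduct

lemma cross3_apply_zero (u v : E3) : cross3 u v 0 = u 1 * v 2 - u 2 * v 1 := rfl
lemma cross3_apply_one (u v : E3) : cross3 u v 1 = u 2 * v 0 - u 0 * v 2 := rfl
lemma cross3_apply_two (u v : E3) : cross3 u v 2 = u 0 * v 1 - u 1 * v 0 := rfl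

lemma inner_fin_three (u v : E3) : ⟪u, v⟫ = u 0 * v 0 + u 1 * v 1 + u 2 * v 2 := by
  simp only [PiLp.inner_apply, RCLike.inner_apply, Real.ringHom_apply, Fin.sum_univ_three]
  ring

lemma norm_sq_fin_three (u : E3) : ‖u‖ ^ 2 = u 0 * u 0 + u 1 * u 1 + u 2 * u 2 := by
  rw [← real_inner_self_eq_norm_sq, inner_fin_three]

lemma cross3_self (u : E3) : cross3 u u = 0 :=
  congrArg (WithLp.toLp 2) (cross_self (WithLp.ofLp u))

lemma norm_cross3_sq_add_inner_sq (u v : E3) :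
    ‖cross3 u v‖ ^ 2 + ⟪u, v⟫ ^ 2 = ‖u‖ ^ 2 * ‖v‖ ^ 2 := by
  simp only [norm_sq_fin_three, inner_fin_three, cross3_apply_zero, cross3_apply_one,
    cross3_apply_two]
  ring

lemma norm_cross3_le (u v : E3) : ‖cross3 u v‖ ≤ ‖u‖ * ‖v‖ := by
  refine (pow_le_pow_iff_left₀ (norm_nonneg _) (by positivity) two_ne_zero).1 ?_
  rw [mul_pow, ← norm_cross3_sq_add_inner_sq]
  exact le_add_of_nonneg_right (sq_nonneg _)

noncomputable def cross3Bilin : E3 →L[ℝ] E3 →L[ℝ] E3 :=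
  LinearMap.mkContinuous₂
    ((crossProduct.compl₁₂ (WithLp.linearEquiv 2 ℝ (Fin 3 → ℝ)).toLinearMap
      (WithLp.linearEquiv 2 ℝ (Fin 3 → ℝ)).toLinearMap).compr₂
      (WithLp.linearEquiv 2 ℝ (Fin 3 → ℝ)).symm.toLinearMap)
    1 (fun u v => by rw [one_mul]; exact norm_cross3_le u v)

lemma HasDerivAt.cross3 {f g : ℝ → E3} {f' g' : E3} {x : ℝ}
    (hf : HasDerivAt f f' x) (hg : HasDerivAt g g' x) :
    HasDerivAt (fun y => cross3 (f y) (g y)) (cross3 (f x) g' + cross3 f' (g x)) x :=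
  cross3Bilin.hasDerivAt_of_bilinear (fun _ => hf) (fun _ => hg)

@[fun_prop] lemma Continuous.cross3 {α : Type*} [TopologicalSpace α] {f g : α → E3}
    (hf : Continuous f) (hg : Continuous g) : Continuous (fun y => cross3 (f y) (g y)) :=
  cross3Bilin.continuous₂.comp (hf.prodMk hg)

lemma inner_cross3_cross3_self_left (u w c : E3) :
    ⟪cross3 u (cross3 u w), c⟫ = -⟪cross3 u c, cross3 u w⟫ := by
  simp only [inner_fin_three, cross3_apply_zero, cross3_apply_one, cross3_apply_two]
  ring

@[simp] lemma cross3_zero_right (u : E3) : cross3 u 0 = 0 := (cross3Bilin u).map_zero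

end CrossProduct

noncomputable def controlledLLField (ν k : ℝ) (r a w : E3) : E3 :=
  cross3 a w - ν • cross3 a (cross3 a w) + k • (r - a)

lemma inner_controlledLLField (ν k : ℝ) (r a w : E3) :
    ⟪controlledLLField ν k r a w, a - r - w⟫
      = ν * ⟪cross3 a (cross3 a w), r⟫ - ⟪cross3 a w, r⟫ - ν * ‖cross3 a w‖ ^ 2
        - k * ‖a - r‖ ^ 2 + k * ⟪a - r, w⟫ := by
  simp only [controlledLLField, inner_fin_three, norm_sq_fin_three, PiLp.add_apply,
    PiLp.sub_apply, PiLp.smul_apply, smul_eq_mul, cross3_apply_zero, cross3_apply_one,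
    cross3_apply_two]
  ring

lemma sq_integral_le_mul_integral_sq {f : ℝ → ℝ} {L : ℝ} (hL : 0 ≤ L) (hf : Continuous f) :
    (∫ x in (0 : ℝ)..L, f x) ^ 2 ≤ L * ∫ x in (0 : ℝ)..L, f x ^ 2 := by
  have hint : ∀ g : ℝ → ℝ, Continuous g → IntervalIntegrable g MeasureTheory.volume 0 L :=
    fun g hg => hg.intervalIntegrable _ _
  have hquad : ∀ c : ℝ, 0 ≤ L * (c * c) + (-2 * ∫ x in (0 : ℝ)..L, f x) * c
      + ∫ x in (0 : ℝ)..L, f x ^ 2 := by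
    intro c
    have hexp : ∫ x in (0 : ℝ)..L, (f x - c) ^ 2
        = L * (c * c) + (-2 * ∫ x in (0 : ℝ)..L, f x) * c + ∫ x in (0 : ℝ)..L, f x ^ 2 := by
      simp_rw [sub_sq]
      rw [integral_add (hint _ (by fun_prop)) (hint _ (by fun_prop)),
        integral_sub (hint _ (by fun_prop)) (hint _ (by fun_prop))]
      simp only [integral_const, smul_eq_mul, integral_const_mul, integral_mul_const]
      ring
    rw [← hexp]
    exact integral_nonneg hL fun x _ => sq_nonneg _
  have := discrim_le_zero hquad
  rw [discrim] at this
  linarith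

section NeumannCurve

variable {E : Type*} [NormedAddCommGroup E] [InnerProductSpace ℝ E] {L : ℝ}

lemma integral_inner_deriv_eq_neg_of_neumann {b b' a' a'' : ℝ → E}
    (hb : ∀ x, HasDerivAt b (b' x) x) (ha' : ∀ x, HasDerivAt a' (a'' x) x)
    (hb' : Continuous b') (ha'' : Continuous a'') (h0 : a' 0 = 0) (hL : a' L = 0) :
    ∫ x in (0 : ℝ)..L, ⟪b' x, a' x⟫ = -∫ x in (0 : ℝ)..L, ⟪b x, a'' x⟫ := by
  have hcb : Continuous b := continuous_iff_continuousAt.2 fun x => (hb x).continuousAt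
  have hca' : Continuous a' := continuous_iff_continuousAt.2 fun x => (ha' x).continuousAt
  have hibp : ∫ x in (0 : ℝ)..L, (⟪b x, a'' x⟫ + ⟪b' x, a' x⟫) = 0 := by
    rw [integral_eq_sub_of_hasDerivAt (fun x _ => (hb x).inner ℝ (ha' x))
      (by apply Continuous.intervalIntegrable; fun_prop)]
    simp [h0, hL]
  rw [integral_add (by apply Continuous.intervalIntegrable; fun_prop)
    (by apply Continuous.intervalIntegrable; fun_prop)] at hibp
  linarith

lemma integral_inner_sub_deriv_two_of_neumann {a a' a'' : ℝ → E}
    (ha : ∀ x, HasDerivAt a (a' x) x) (ha' : ∀ x, HasDerivAt a' (a'' x) x)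
    (ha'' : Continuous a'') (h0 : a' 0 = 0) (hL : a' L = 0) (c : E) :
    ∫ x in (0 : ℝ)..L, ⟪a x - c, a'' x⟫ = -∫ x in (0 : ℝ)..L, ‖a' x‖ ^ 2 := by
  have hca' : Continuous a' := continuous_iff_continuousAt.2 fun x => (ha' x).continuousAt
  simp_rw [← real_inner_self_eq_norm_sq]
  rw [integral_inner_deriv_eq_neg_of_neumann (fun x => (ha x).sub_const c) ha' hca' ha'' h0 hL,
    neg_neg]

noncomputable def h1DistSq (L : ℝ) (r : E) (g : ℝ → E) : ℝ :=
  (∫ x in (0 : ℝ)..L, ‖deriv g x‖ ^ 2) + (∫ x in (0 : ℝ)..L, ‖g x - r‖ ^ 2)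

lemma h1DistSq_nonneg (hL : 0 ≤ L) (r : E) (g : ℝ → E) : 0 ≤ h1DistSq L r g :=
  add_nonneg (integral_nonneg hL fun _ _ => sq_nonneg _) (integral_nonneg hL fun _ _ => sq_nonneg _)

end NeumannCurve

section NeumannCurve3

variable {a a' a'' : ℝ → E3} {L : ℝ}

lemma hasDerivAt_cross3_deriv {x : ℝ} (ha : HasDerivAt a (a' x) x)
    (ha' : HasDerivAt a' (a'' x) x) :
    HasDerivAt (fun y => cross3 (a y) (a' y)) (cross3 (a x) (a'' x)) x := by
  simpa [cross3_self] using ha.cross3 ha'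

lemma integral_cross3_deriv_two (ha : ∀ x, HasDerivAt a (a' x) x)
    (ha' : ∀ x, HasDerivAt a' (a'' x) x) (ha'' : Continuous a'') (b c : ℝ) :
    ∫ x in b..c, cross3 (a x) (a'' x) = cross3 (a c) (a' c) - cross3 (a b) (a' b) := by
  have hca : Continuous a := continuous_iff_continuousAt.2 fun x => (ha x).continuousAt
  exact integral_eq_sub_of_hasDerivAt (fun x _ => hasDerivAt_cross3_deriv (ha x) (ha' x))
    ((hca.cross3 ha'').intervalIntegrable _ _)

lemma norm_cross3_deriv_le_integral (ha : ∀ x, HasDerivAt a (a' x) x)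
    (ha' : ∀ x, HasDerivAt a' (a'' x) x) (ha'' : Continuous a'') (h0 : a' 0 = 0)
    {y : ℝ} (hy : y ∈ Set.Icc 0 L) :
    ‖cross3 (a y) (a' y)‖ ≤ ∫ x in (0 : ℝ)..L, ‖cross3 (a x) (a'' x)‖ := by
  have hca : Continuous a := continuous_iff_continuousAt.2 fun x => (ha x).continuousAt
  calc ‖cross3 (a y) (a' y)‖ = ‖∫ x in (0 : ℝ)..y, cross3 (a x) (a'' x)‖ := by
        rw [integral_cross3_deriv_two ha ha' ha'', h0, cross3_zero_right, sub_zero]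
    _ ≤ ∫ x in (0 : ℝ)..y, ‖cross3 (a x) (a'' x)‖ := norm_integral_le_integral_norm hy.1
    _ ≤ ∫ x in (0 : ℝ)..L, ‖cross3 (a x) (a'' x)‖ :=
        integral_mono_interval le_rfl hy.1 hy.2 (Filter.Eventually.of_forall fun _ => norm_nonneg _)
          ((hca.cross3 ha'').norm.intervalIntegrable _ _)

lemma integral_inner_cross3_deriv_two_of_neumann (ha : ∀ x, HasDerivAt a (a' x) x)
    (ha' : ∀ x, HasDerivAt a' (a'' x) x) (ha'' : Continuous a'') (h0 : a' 0 = 0)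
    (hL : a' L = 0) (c : E3) :
    ∫ x in (0 : ℝ)..L, ⟪cross3 (a x) (a'' x), c⟫ = 0 := by
  have hca : Continuous a := continuous_iff_continuousAt.2 fun x => (ha x).continuousAt
  have := integral_inner_deriv_eq_neg_of_neumann (L := L) (hasDerivAt_const · c)
    (fun x => hasDerivAt_cross3_deriv (ha x) (ha' x)) continuous_const (hca.cross3 ha'')
    (by simp [h0]) (by simp [hL])
  simpa [real_inner_comm c] using this

lemma integral_inner_cross3_cross3_deriv_two_of_neumann (ha : ∀ x, HasDerivAt a (a' x) x)
    (ha' : ∀ x, HasDerivAt a' (a'' x) x) (ha'' : Continuous a'') (h0 : a' 0 = 0)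
    (hL : a' L = 0) (c : E3) :
    ∫ x in (0 : ℝ)..L, ⟪cross3 (a x) (cross3 (a x) (a'' x)), c⟫
      = ∫ x in (0 : ℝ)..L, ⟪cross3 (a' x) c, cross3 (a x) (a' x)⟫ := by
  have hca : Continuous a := continuous_iff_continuousAt.2 fun x => (ha x).continuousAt
  have hca' : Continuous a' := continuous_iff_continuousAt.2 fun x => (ha' x).continuousAt
  have := integral_inner_deriv_eq_neg_of_neumann (L := L)
    (fun x => (ha x).cross3 (hasDerivAt_const x c))
    (fun x => hasDerivAt_cross3_deriv (ha x) (ha' x)) (by fun_prop) (hca.cross3 ha'')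
    (by simp [h0]) (by simp [hL])
  simp only [cross3_zero_right, zero_add] at this
  simp only [inner_cross3_cross3_self_left, integral_neg, this]

lemma integral_inner_cross3_deriv_le (ha : ∀ x, HasDerivAt a (a' x) x)
    (ha' : ∀ x, HasDerivAt a' (a'' x) x) (ha'' : Continuous a'') (h0 : a' 0 = 0) (hL0 : 0 ≤ L)
    {c : E3} (hc : ‖c‖ ≤ 1) :
    ∫ x in (0 : ℝ)..L, ⟪cross3 (a' x) c, cross3 (a x) (a' x)⟫
      ≤ (∫ x in (0 : ℝ)..L, ‖cross3 (a x) (a'' x)‖ ^ 2)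
        + L ^ 2 / 4 * ∫ x in (0 : ℝ)..L, ‖a' x‖ ^ 2 := by
  have hca : Continuous a := continuous_iff_continuousAt.2 fun x => (ha x).continuousAt
  have hca' : Continuous a' := continuous_iff_continuousAt.2 fun x => (ha' x).continuousAt
  set A := ∫ x in (0 : ℝ)..L, ‖cross3 (a x) (a'' x)‖
  set B := ∫ x in (0 : ℝ)..L, ‖a' x‖
  set J := ∫ x in (0 : ℝ)..L, ‖cross3 (a x) (a'' x)‖ ^ 2
  set I := ∫ x in (0 : ℝ)..L, ‖a' x‖ ^ 2
  have hpoint : ∀ x ∈ Set.Icc 0 L, ⟪cross3 (a' x) c, cross3 (a x) (a' x)⟫ ≤ ‖a' x‖ * A := by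
    intro x hx
    have hc' : ‖cross3 (a' x) c‖ ≤ ‖a' x‖ :=
      (norm_cross3_le _ _).trans (mul_le_of_le_one_right (norm_nonneg _) hc)
    exact (real_inner_le_norm _ _).trans <| mul_le_mul hc'
      (norm_cross3_deriv_le_integral ha ha' ha'' h0 hx) (norm_nonneg _) (norm_nonneg _)
  have hAB : ∫ x in (0 : ℝ)..L, ⟪cross3 (a' x) c, cross3 (a x) (a' x)⟫ ≤ B * A := by
    rw [← integral_mul_const]
    exact integral_mono_on hL0 (by apply Continuous.intervalIntegrable; fun_prop)
      (by apply Continuous.intervalIntegrable; fun_prop) hpoint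
  have hA : A ^ 2 ≤ L * J := sq_integral_le_mul_integral_sq hL0 (by fun_prop)
  have hB : B ^ 2 ≤ L * I := sq_integral_le_mul_integral_sq hL0 (by fun_prop)
  have hA0 : 0 ≤ A := integral_nonneg hL0 fun _ _ => norm_nonneg _
  have hB0 : 0 ≤ B := integral_nonneg hL0 fun _ _ => norm_nonneg _
  have hJ0 : 0 ≤ J := integral_nonneg hL0 fun _ _ => sq_nonneg _
  have hI0 : 0 ≤ I := integral_nonneg hL0 fun _ _ => sq_nonneg _
  have hsq : (B * A) ^ 2 ≤ (J + L ^ 2 / 4 * I) ^ 2 :=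
    calc (B * A) ^ 2 = A ^ 2 * B ^ 2 := by ring
      _ ≤ (L * J) * (L * I) := mul_le_mul hA hB (sq_nonneg _) (by positivity)
      _ ≤ (J + L ^ 2 / 4 * I) ^ 2 := by nlinarith [sq_nonneg (J - L ^ 2 / 4 * I)]
  exact hAB.trans ((pow_le_pow_iff_left₀ (by positivity) (by positivity) two_ne_zero).1 hsq)

lemma integral_inner_controlledLLField_le (ha : ∀ x, HasDerivAt a (a' x) x)
    (ha' : ∀ x, HasDerivAt a' (a'' x) x) (ha'' : Continuous a'') (h0 : a' 0 = 0)
    (hL : a' L = 0) (hL0 : 0 ≤ L) {ν : ℝ} (hν : 0 ≤ ν) (k : ℝ) {r : E3} (hr : ‖r‖ ≤ 1) :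
    ∫ x in (0 : ℝ)..L, ⟪controlledLLField ν k r (a x) (a'' x), a x - r - a'' x⟫
      ≤ -(k - ν * L ^ 2 / 4) * h1DistSq L r a := by
  have hca : Continuous a := continuous_iff_continuousAt.2 fun x => (ha x).continuousAt
  have hI : 0 ≤ ∫ x in (0 : ℝ)..L, ‖a x - r‖ ^ 2 := integral_nonneg hL0 fun _ _ => sq_nonneg _
  rw [h1DistSq, show deriv a = a' from funext fun x => (ha x).deriv]
  simp only [inner_controlledLLField]
  rw [integral_add, integral_sub, integral_sub, integral_sub, integral_const_mul,
    integral_const_mul, integral_const_mul, integral_const_mul,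
    integral_inner_cross3_deriv_two_of_neumann ha ha' ha'' h0 hL,
    integral_inner_cross3_cross3_deriv_two_of_neumann ha ha' ha'' h0 hL,
    integral_inner_sub_deriv_two_of_neumann ha ha' ha'' h0 hL]
  · have := mul_le_mul_of_nonneg_left
      (integral_inner_cross3_deriv_le ha ha' ha'' h0 hL0 hr) hν
    nlinarith [mul_nonneg (mul_nonneg hν (sq_nonneg L)) hI]
  all_goals apply Continuous.intervalIntegrable; fun_prop

end NeumannCurve3

section PartialDeriv

variable {E : Type*} [NormedAddCommGroup E] [NormedSpace ℝ E] {f : ℝ × ℝ → E}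

noncomputable def partialFst (f : ℝ × ℝ → E) (p : ℝ × ℝ) : E := fderiv ℝ f p (1, 0)

noncomputable def partialSnd (f : ℝ × ℝ → E) (p : ℝ × ℝ) : E := fderiv ℝ f p (0, 1)

lemma DifferentiableAt.hasDerivAt_partialFst {t x : ℝ} (hf : DifferentiableAt ℝ f (t, x)) :
    HasDerivAt (fun s => f (s, x)) (partialFst f (t, x)) t :=
  hf.hasFDerivAt.comp_hasDerivAt t ((hasDerivAt_id t).prodMk (hasDerivAt_const t x))

lemma DifferentiableAt.hasDerivAt_partialSnd {t x : ℝ} (hf : DifferentiableAt ℝ f (t, x)) :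
    HasDerivAt (fun y => f (t, y)) (partialSnd f (t, x)) x :=
  hf.hasFDerivAt.comp_hasDerivAt x ((hasDerivAt_const x t).prodMk (hasDerivAt_id x))

lemma deriv_eq_partialSnd (hf : Differentiable ℝ f) (t : ℝ) :
    deriv (fun x => f (t, x)) = fun x => partialSnd f (t, x) :=
  funext fun x => (hf (t, x)).hasDerivAt_partialSnd.deriv

lemma ContDiff.partialFst {n : WithTop ℕ∞} (hf : ContDiff ℝ (n + 1) f) :
    ContDiff ℝ n (partialFst f) :=
  (hf.fderiv_right le_rfl).clm_apply contDiff_const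

lemma ContDiff.partialSnd {n : WithTop ℕ∞} (hf : ContDiff ℝ (n + 1) f) :
    ContDiff ℝ n (partialSnd f) :=
  (hf.fderiv_right le_rfl).clm_apply contDiff_const

lemma partialFst_partialSnd (hf : ContDiff ℝ 2 f) :
    partialFst (partialSnd f) = partialSnd (partialFst f) := by
  ext1 p
  have hd : DifferentiableAt ℝ (fderiv ℝ f) p :=
    (hf.fderiv_right (m := 1) le_rfl).differentiable one_ne_zero p
  have hflip : ∀ v w : ℝ × ℝ,
      fderiv ℝ (fun q => fderiv ℝ f q v) p w = fderiv ℝ (fderiv ℝ f) p w v :=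
    fun v w => by simp [fderiv_clm_apply hd (differentiableAt_const v)]
  change fderiv ℝ (fun q => fderiv ℝ f q (0, 1)) p (1, 0)
    = fderiv ℝ (fun q => fderiv ℝ f q (1, 0)) p (0, 1)
  rw [hflip, hflip]
  exact hf.contDiffAt.isSymmSndFDerivAt (by simp [minSmoothness_of_isRCLikeNormedField]) _ _

end PartialDeriv

section ParametricIntegral

variable {E : Type*} [NormedAddCommGroup E] [NormedSpace ℝ E]

lemma hasDerivAt_intervalIntegral_of_continuous {F F' : ℝ → ℝ → E}
    (hF : Continuous (Function.uncurry F)) (hF' : Continuous (Function.uncurry F'))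
    (hd : ∀ s x, HasDerivAt (fun s => F s x) (F' s x) s) (a b t : ℝ) :
    HasDerivAt (fun s => ∫ x in a..b, F s x) (∫ x in a..b, F' t x) t := by
  obtain ⟨C, hC⟩ : ∃ C, ∀ p ∈ Set.Icc (t - 1) (t + 1) ×ˢ Set.uIcc a b,
      ‖Function.uncurry F' p‖ ≤ C :=
    (isCompact_Icc.prod isCompact_uIcc).exists_bound_of_continuousOn hF'.continuousOn
  have hslice : ∀ {G : ℝ → ℝ → E}, Continuous (Function.uncurry G) → ∀ s, Continuous (G s) :=
    fun hG s => hG.comp (continuous_const.prodMk continuous_id)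
  refine (hasDerivAt_integral_of_dominated_loc_of_deriv_le (bound := fun _ => C)
    (Metric.ball_mem_nhds t one_pos)
    (Filter.Eventually.of_forall fun s => (hslice hF s).aestronglyMeasurable)
    ((hslice hF t).intervalIntegrable _ _) (hslice hF' t).aestronglyMeasurable
    (Filter.Eventually.of_forall fun x hx s hs => hC (s, x) ⟨?_, Set.uIoc_subset_uIcc hx⟩)
    intervalIntegrable_const (Filter.Eventually.of_forall fun x _ s _ => hd s x)).2
  rw [Metric.mem_ball, Real.dist_eq, abs_lt] at hs
  constructor <;> linarith [hs.1, hs.2]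

end ParametricIntegral

lemma le_exp_mul_mul_of_hasDerivAt_le {f f' : ℝ → ℝ} {K : ℝ}
    (hf : ∀ t, 0 ≤ t → HasDerivAt f (f' t) t) (bound : ∀ t, 0 ≤ t → f' t ≤ K * f t)
    {t : ℝ} (ht : 0 ≤ t) : f t ≤ Real.exp (K * t) * f 0 := by
  have := le_gronwallBound_of_liminf_deriv_right_le (ε := 0)
    (fun s hs => (hf s hs.1).continuousAt.continuousWithinAt)
    (fun s hs _ hr => (hf s hs.1).hasDerivWithinAt.liminf_right_slope_le hr) le_rfl
    (fun s hs => by simpa using bound s hs.1) t ⟨ht, le_rfl⟩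
  rwa [gronwallBound_ε0, sub_zero, mul_comm] at this

section Energy

variable {E : Type*} [NormedAddCommGroup E] [InnerProductSpace ℝ E] {f : ℝ × ℝ → E}

lemma hasDerivAt_h1DistSq (hf : ContDiff ℝ 2 f) (r : E) {t L : ℝ}
    (h0 : partialSnd f (t, 0) = 0) (hL : partialSnd f (t, L) = 0) :
    HasDerivAt (fun s => h1DistSq L r (fun x => f (s, x)))
      (2 * ∫ x in (0 : ℝ)..L,
        ⟪partialFst f (t, x), f (t, x) - r - partialSnd (partialSnd f) (t, x)⟫) t := by
  have hf1 : ContDiff ℝ 1 (partialSnd f) := hf.partialSnd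
  have hdf : Differentiable ℝ f := hf.differentiable two_ne_zero
  have hdf1 : Differentiable ℝ (partialSnd f) := hf1.differentiable one_ne_zero
  have hc : Continuous f := hf.continuous
  have hc1 : Continuous (partialSnd f) := hf1.continuous
  have hcFst : Continuous (partialFst f) := (hf.partialFst (n := 1)).continuous
  have hcFstSnd : Continuous (partialFst (partialSnd f)) := (hf1.partialFst (n := 0)).continuous
  have hcSndSnd : Continuous (partialSnd (partialSnd f)) := (hf1.partialSnd (n := 0)).continuous
  have hgrad : HasDerivAt (fun s => ∫ x in (0 : ℝ)..L, ‖partialSnd f (s, x)‖ ^ 2)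
      (∫ x in (0 : ℝ)..L, 2 * ⟪partialSnd f (t, x), partialFst (partialSnd f) (t, x)⟫) t :=
    hasDerivAt_intervalIntegral_of_continuous (by fun_prop) (by fun_prop)
      (fun s x => (hdf1 (s, x)).hasDerivAt_partialFst.norm_sq) _ _ _
  have hdist : HasDerivAt (fun s => ∫ x in (0 : ℝ)..L, ‖f (s, x) - r‖ ^ 2)
      (∫ x in (0 : ℝ)..L, 2 * ⟪f (t, x) - r, partialFst f (t, x)⟫) t :=
    hasDerivAt_intervalIntegral_of_continuous (by fun_prop) (by fun_prop)
      (fun s x => ((hdf (s, x)).hasDerivAt_partialFst.sub_const r).norm_sq) _ _ _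
  have hibp : ∫ x in (0 : ℝ)..L, ⟪partialFst (partialSnd f) (t, x), partialSnd f (t, x)⟫
      = -∫ x in (0 : ℝ)..L, ⟪partialFst f (t, x), partialSnd (partialSnd f) (t, x)⟫ := by
    have hf2 : ContDiff ℝ 1 (partialFst f) := hf.partialFst
    rw [partialFst_partialSnd hf]
    exact integral_inner_deriv_eq_neg_of_neumann
      (fun x => (hf2.differentiable one_ne_zero (t, x)).hasDerivAt_partialSnd)
      (fun x => (hdf1 (t, x)).hasDerivAt_partialSnd)
      ((hf2.partialSnd (n := 0)).continuous.comp (by fun_prop)) (by fun_prop) h0 hL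
  simp only [h1DistSq, deriv_eq_partialSnd hdf]
  refine (hgrad.add hdist).congr_deriv (Eq.symm ?_)
  calc 2 * ∫ x in (0 : ℝ)..L,
        ⟪partialFst f (t, x), f (t, x) - r - partialSnd (partialSnd f) (t, x)⟫
      = 2 * ((∫ x in (0 : ℝ)..L, ⟪partialFst (partialSnd f) (t, x), partialSnd f (t, x)⟫)
          + ∫ x in (0 : ℝ)..L, ⟪f (t, x) - r, partialFst f (t, x)⟫) := by
        rw [hibp, neg_add_eq_sub, ← integral_sub (by apply Continuous.intervalIntegrable; fun_prop)
          (by apply Continuous.intervalIntegrable; fun_prop)]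
        simp only [inner_sub_right, real_inner_comm (partialFst f _)]
    _ = _ := by simp only [integral_const_mul, real_inner_comm (partialSnd f _)]; ring

end Energy

theorem controlled_landau_lifshitz_H1_exponential_stability
    (L ν k : ℝ) (hL : 0 < L) (hν : 0 ≤ ν)
    (r : EuclideanSpace ℝ (Fin 3)) (hr : ‖r‖ = 1)
    (m : ℝ → ℝ → EuclideanSpace ℝ (Fin 3))
    (hsmooth : ContDiff ℝ 2 (fun p : ℝ × ℝ => m p.1 p.2))
    (hpde : ∀ t x : ℝ, 0 ≤ t → x ∈ Set.Icc (0 : ℝ) L →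
      deriv (fun s => m s x) t
        = cross3 (m t x) (mxx m t x)
          - ν • cross3 (m t x) (cross3 (m t x) (mxx m t x))
          + k • (r - m t x))
    (hbc : ∀ t : ℝ, 0 ≤ t → deriv (m t) 0 = 0 ∧ deriv (m t) L = 0) :
    ∀ t : ℝ, 0 ≤ t →
      (∫ x in (0 : ℝ)..L, ‖deriv (m t) x‖ ^ 2) + (∫ x in (0 : ℝ)..L, ‖m t x - r‖ ^ 2)
        ≤ Real.exp (-2 * (k - 2 * ν * L ^ 2) * t)
          * ((∫ x in (0 : ℝ)..L, ‖deriv (m 0) x‖ ^ 2)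
            + ∫ x in (0 : ℝ)..L, ‖m 0 x - r‖ ^ 2) := by
  set f : ℝ × ℝ → E3 := fun p => m p.1 p.2
  have hdf : Differentiable ℝ f := hsmooth.differentiable two_ne_zero
  have hdf1 : Differentiable ℝ (partialSnd f) := hsmooth.partialSnd.differentiable one_ne_zero
  have hmx : ∀ t, deriv (m t) = fun x => partialSnd f (t, x) := deriv_eq_partialSnd hdf
  have hneumann : ∀ t, 0 ≤ t → partialSnd f (t, 0) = 0 ∧ partialSnd f (t, L) = 0 :=
    fun t ht => by simpa only [hmx] using hbc t ht
  have hfield : ∀ t, 0 ≤ t → ∀ x ∈ Set.uIcc 0 L,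
      partialFst f (t, x) = controlledLLField ν k r (m t x) (partialSnd (partialSnd f) (t, x)) := by
    intro t ht x hx
    rw [← (hdf (t, x)).hasDerivAt_partialFst.deriv, hpde t x ht (Set.uIcc_of_le hL.le ▸ hx),
      mxx, hmx, deriv_eq_partialSnd hdf1, controlledLLField]
  have hdecay : ∀ t, 0 ≤ t →
      2 * ∫ x in (0 : ℝ)..L, ⟪partialFst f (t, x), f (t, x) - r - partialSnd (partialSnd f) (t, x)⟫
        ≤ -2 * (k - 2 * ν * L ^ 2) * h1DistSq L r (fun x => f (t, x)) := by
    intro t ht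
    rw [integral_congr fun x hx => by rw [hfield t ht x hx]]
    have hdiss := integral_inner_controlledLLField_le (fun x => (hdf (t, x)).hasDerivAt_partialSnd)
      (fun x => (hdf1 (t, x)).hasDerivAt_partialSnd)
      (((hsmooth.partialSnd (n := 1)).partialSnd (n := 0)).continuous.comp (by fun_prop))
      (hneumann t ht).1 (hneumann t ht).2 hL.le hν k hr.le
    nlinarith [mul_nonneg (mul_nonneg hν (sq_nonneg L)) (h1DistSq_nonneg hL.le r (m t))]
  intro t ht
  exact le_exp_mul_mul_of_hasDerivAt_le (fun s hs => hasDerivAt_h1DistSq hsmooth r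
    (hneumann s hs).1 (hneumann s hs).2) hdecay ht
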